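/- arXiv:2108.02136 — 5 statements merged into one kernel-verified Lean document; each statement's English description precedes it below -/
import Mathlib

section
/- Let V' be a set of εn/log n nodes and for each v ∈ V' let f_v be a probability density function over a set V of n nodes with f_v(w) ≤ 1/log^4 n for all w. If for every w ∈ V the sum over v ∈ V' of f_v(w) is at most log^2 n, then the set R = {w ∈ V : Σ_{v∈V'} f_v(w) > ε/(2 log n)} has size strictly greater than n^{7/8}. -/
/-!
Each of the `εn / log n` densities has total mass one, so the column sums `Σ_{v ∈ V'} f_v(w)`
add up to `εn / log n`. Columns outside `R` contribute at most `n · ε / (2 log n)`, half of that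
total, and each column in `R` at most `log² n`. Hence `|R| log² n ≥ εn / (2 log n)`, and
`|R| ≤ n^{7/8}` would force `ε n^{1/8} ≤ 2 log³ n`, which fails for large `n`.
-/

open Finset Real Filter

lemma sum_le_card_filter_lt_mul_add {ι : Type*} [Fintype ι] (g : ι → ℝ) {t B : ℝ}
    (ht : 0 ≤ t) (hB : ∀ i, g i ≤ B) :
    ∑ i, g i ≤ #{i | t < g i} * B + Fintype.card ι * t := by
  calc ∑ i, g i = ∑ i with t < g i, g i + ∑ i with ¬t < g i, g i :=
        (sum_filter_add_sum_filter_not _ _ g).symm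
    _ ≤ ∑ i with t < g i, B + ∑ i with ¬t < g i, t :=
        add_le_add (sum_le_sum fun i _ => hB i)
          (sum_le_sum fun i hi => not_lt.1 (mem_filter.1 hi).2)
    _ = #{i | t < g i} * B + #{i | ¬t < g i} * t := by simp only [sum_const, nsmul_eq_mul]
    _ ≤ #{i | t < g i} * B + Fintype.card ι * t := by gcongr; exact_mod_cast card_le_univ _

lemma sum_sum_eq_card_of_sum_eq_one {ι κ : Type*} [Fintype κ] (s : Finset ι) (f : ι → κ → ℝ)
    (hf : ∀ i ∈ s, ∑ j, f i j = 1) : ∑ j, ∑ i ∈ s, f i j = #s := by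
  rw [sum_comm, sum_congr rfl hf, sum_const, nsmul_one]

lemma eventually_log_pow_lt_mul_rpow {c s : ℝ} (hc : 0 < c) (hs : 0 < s) (k : ℕ) :
    ∀ᶠ x : ℝ in atTop, log x ^ k < c * x ^ s := by
  filter_upwards [(isLittleO_log_rpow_rpow_atTop k hs).def (half_pos hc),
    eventually_ge_atTop 1] with x hx hx1
  have hxs : 0 < x ^ s := rpow_pos_of_pos (by linarith) s
  rw [rpow_natCast, norm_eq_abs, norm_eq_abs, abs_of_pos hxs] at hx
  linarith [le_abs_self (log x ^ k), mul_lt_mul_of_pos_right (half_lt_self hc) hxs]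

lemma rpow_one_eighth_mul_le_of_mul_le {ε L x : ℝ} (hL : 0 < L) (hx : 0 < x)
    (h : ε * x / (2 * L) ≤ x ^ ((7 : ℝ) / 8) * L ^ 2) : ε * x ^ ((1 : ℝ) / 8) ≤ 2 * L ^ 3 := by
  have hx78 : 0 < x ^ ((7 : ℝ) / 8) := rpow_pos_of_pos hx _
  have hsplit : x ^ ((7 : ℝ) / 8) * x ^ ((1 : ℝ) / 8) = x := by
    rw [← rpow_add hx]; norm_num
  rw [div_le_iff₀ (by positivity)] at h
  refine le_of_mul_le_mul_left ?_ hx78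
  calc x ^ ((7 : ℝ) / 8) * (ε * x ^ ((1 : ℝ) / 8)) = ε * x := by linear_combination ε * hsplit
    _ ≤ x ^ ((7 : ℝ) / 8) * L ^ 2 * (2 * L) := h
    _ = x ^ ((7 : ℝ) / 8) * (2 * L ^ 3) := by ring

/-- for sufficiently large `n`, if `V'` has `εn/log n` nodes and each `f_v`
(`v ∈ V'`) is a PDF on a set `V` of `n` nodes with `f_v(w) ≤ 1/log^4 n`, and every column sum
`Σ_{v∈V'} f_v(w)` is at most `log² n`, then the set
`R = {w : Σ_{v∈V'} f_v(w) > ε/(2 log n)}` has size `> n^{7/8}`. -/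
theorem stmt2 (ε : ℝ) (hε : 0 < ε) :
    ∃ N : ℕ, ∀ n : ℕ, N ≤ n →
    ∀ (V : Type) [Fintype V] [DecidableEq V], Fintype.card V = n →
    ∀ (V' : Finset V) (f : V → V → ℝ),
      (V'.card : ℝ) = ε * n / Real.log n →
      (∀ v ∈ V', ∀ w, 0 ≤ f v w) →
      (∀ v ∈ V', ∑ w, f v w = 1) →
      (∀ v ∈ V', ∀ w, f v w ≤ 1 / (Real.log n) ^ 4) →
      (∀ w, ∑ v ∈ V', f v w ≤ (Real.log n) ^ 2) →
      (n : ℝ) ^ ((7 : ℝ) / 8) <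
        ((Finset.univ.filter fun w => ε / (2 * Real.log n) < ∑ v ∈ V', f v w).card : ℝ) := by
  obtain ⟨N, hN⟩ := eventually_atTop.1 <|
    (tendsto_natCast_atTop_atTop.eventually
      (eventually_log_pow_lt_mul_rpow (half_pos hε) (by norm_num : (0 : ℝ) < 1 / 8) 3)).and
    (eventually_ge_atTop 2)
  refine ⟨N, fun n hn V _ _ hcard V' f hV' _ hf1 _ hcol => ?_⟩
  obtain ⟨hlog, hn2⟩ := hN n hn
  have hL : 0 < log n := log_pos (by exact_mod_cast hn2)
  by_contra! hR
  have hcount := sum_le_card_filter_lt_mul_add (fun w => ∑ v ∈ V', f v w)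
    (by positivity : 0 ≤ ε / (2 * log n)) hcol
  rw [sum_sum_eq_card_of_sum_eq_one V' f hf1, hV', hcard] at hcount
  have hhalf : ε * n / (2 * log n) ≤ (n : ℝ) ^ ((7 : ℝ) / 8) * log n ^ 2 := by
    have : ε * n / log n = ε * n / (2 * log n) + n * (ε / (2 * log n)) := by
      field_simp; ring
    linarith [mul_le_mul_of_nonneg_right hR (sq_nonneg (log n))]
  linarith [rpow_one_eighth_mul_le_of_mul_le hL (by positivity) hhalf]
end

section
/- Let V' be a set of nodes, w a fixed node, and f_v(w) ∈ (0, 1/log^4 n] probabilities. Partition V' into sets V'(i) = {v ∈ V' : f_v(w) ∈ (1/log^{5+i} n, 1/log^{4+i} n]} for i ≥ 0. If Σ_{v∈V'} f_v(w) > ε/(2 log n), then there exists j < log n/log log n with |V'(j)| > log^j n. -/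
/-!
Write `L = log n`. Every value in `(0, 1/L^4]` lies in one of the shells `(1/L^(5+j), 1/L^(4+j)]`
with `j < M` or is at most `1/L^(4+M)`. If every shell with `j < M` had at most `L^j` elements, each
would contribute at most `L^j · L^(-4-j) = L^(-4)` to the sum, and the values below `1/L^(4+M)`
together at most `n · L^(-4-M) ≤ L^(-4)` as soon as `L^M ≥ n`, which holds for
`M = ⌈L / log L⌉`. The resulting bound `(M + 1)/L^4 ≤ 1/L^3` is below `ε/(2L)` for large `n`.
-/

open Finset Real Filter

/-- With `k = 4` this is the class `V'(j)` of the statement. -/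
noncomputable def logShell {V : Type*} (s : Finset V) (g : V → ℝ) (L : ℝ) (k j : ℕ) : Finset V :=
  s.filter fun v => 1 / L ^ (k + 1 + j) < g v ∧ g v ≤ 1 / L ^ (k + j)

theorem sum_filter_le_eq_sum_logShell_add {V : Type*} (s : Finset V) (g : V → ℝ) {L : ℝ}
    (hL : 1 ≤ L) (k M : ℕ) :
    ∑ v ∈ s.filter (fun v => g v ≤ 1 / L ^ k), g v =
      ∑ j ∈ range M, ∑ v ∈ logShell s g L k j, g v +
        ∑ v ∈ s.filter (fun v => g v ≤ 1 / L ^ (k + M)), g v := by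
  induction M with
  | zero => simp
  | succ M ih =>
    have hshell : (s.filter fun v => g v ≤ 1 / L ^ (k + M)).filter
        (fun v => 1 / L ^ (k + 1 + M) < g v) = logShell s g L k M := by
      rw [filter_filter, logShell]
      exact filter_congr fun v _ => and_comm
    have htail : (s.filter fun v => g v ≤ 1 / L ^ (k + M)).filter
        (fun v => ¬ 1 / L ^ (k + 1 + M) < g v) = s.filter fun v => g v ≤ 1 / L ^ (k + (M + 1)) := by
      rw [filter_filter, add_right_comm]
      refine filter_congr fun v _ => ⟨fun h => not_lt.1 h.2, fun h => ⟨h.trans ?_, not_lt.2 h⟩⟩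
      gcongr
      omega
    rw [ih, sum_range_succ, add_assoc,
      ← sum_filter_add_sum_filter_not _ (fun v => 1 / L ^ (k + 1 + M) < g v), hshell, htail]

theorem sum_le_of_card_logShell_le {V : Type*} (s : Finset V) (g : V → ℝ) {L : ℝ} (hL : 1 ≤ L)
    (k M : ℕ) (hg : ∀ v ∈ s, g v ≤ 1 / L ^ k)
    (hshell : ∀ j < M, (#(logShell s g L k j) : ℝ) ≤ L ^ j) (hs : (#s : ℝ) ≤ L ^ M) :
    ∑ v ∈ s, g v ≤ (M + 1) / L ^ k := by
  have hshell_sum : ∀ j ∈ range M, ∑ v ∈ logShell s g L k j, g v ≤ 1 / L ^ k := by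
    intro j hj
    calc ∑ v ∈ logShell s g L k j, g v ≤ #(logShell s g L k j) • (1 / L ^ (k + j)) :=
          sum_le_card_nsmul _ _ _ fun v hv => (mem_filter.1 hv).2.2
      _ ≤ L ^ j * (1 / L ^ (k + j)) := by
          rw [nsmul_eq_mul]; gcongr; exact hshell j (mem_range.1 hj)
      _ = 1 / L ^ k := by rw [pow_add]; field_simp
  have htail_sum : ∑ v ∈ s.filter (fun v => g v ≤ 1 / L ^ (k + M)), g v ≤ 1 / L ^ k := by
    calc _ ≤ #(s.filter fun v => g v ≤ 1 / L ^ (k + M)) • (1 / L ^ (k + M)) :=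
          sum_le_card_nsmul _ _ _ fun v hv => (mem_filter.1 hv).2
      _ ≤ L ^ M * (1 / L ^ (k + M)) := by
          rw [nsmul_eq_mul]; gcongr; exact (Nat.cast_le.2 (card_filter_le _ _)).trans hs
      _ = 1 / L ^ k := by rw [pow_add]; field_simp
  rw [← filter_true_of_mem hg, sum_filter_le_eq_sum_logShell_add s g hL k M]
  calc _ ≤ ∑ j ∈ range M, 1 / L ^ k + 1 / L ^ k := add_le_add (sum_le_sum hshell_sum) htail_sum
    _ = (M + 1) / L ^ k := by rw [sum_const, card_range, nsmul_eq_mul]; ring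

theorem exp_le_pow_ceil_div_log {L : ℝ} (hL : 1 < L) : exp L ≤ L ^ ⌈L / log L⌉₊ := by
  have hlog : 0 < log L := log_pos hL
  calc exp L = exp (L / log L * log L) := by rw [div_mul_cancel₀ _ hlog.ne']
    _ ≤ exp (⌈L / log L⌉₊ * log L) := by gcongr; exact Nat.le_ceil _
    _ = L ^ ⌈L / log L⌉₊ := by rw [exp_nat_mul, exp_log (one_pos.trans hL)]

theorem ceil_div_log_add_one_le {L : ℝ} (hL : 4 ≤ L) (hlog : 2 ≤ log L) :
    (⌈L / log L⌉₊ : ℝ) + 1 ≤ L := by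
  have hceil := Nat.ceil_lt_add_one (div_nonneg (by linarith) (by linarith) : 0 ≤ L / log L)
  have hhalf : L / log L ≤ L / 2 := div_le_div_of_nonneg_left (by linarith) two_pos hlog
  linarith

/-- for sufficiently large `n`, if `V'` (of size at most `n`) carries
probabilities `g v ∈ (0, 1/log^4 n]` summing to more than `ε/(2 log n)`, then some class
`V'(j) = {v : g v ∈ (1/log^{5+j} n, 1/log^{4+j} n]}` with `j < log n/log log n` has size
greater than `log^j n`. -/
theorem stmt3 (ε : ℝ) (hε : 0 < ε) :
    ∃ N : ℕ, ∀ n : ℕ, N ≤ n →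
    ∀ (V : Type) (V' : Finset V) (g : V → ℝ),
      V'.card ≤ n →
      (∀ v ∈ V', 0 < g v ∧ g v ≤ 1 / (Real.log n) ^ 4) →
      ε / (2 * Real.log n) < ∑ v ∈ V', g v →
      ∃ j : ℕ, (j : ℝ) < Real.log n / Real.log (Real.log n) ∧
        (Real.log n) ^ j <
          ((V'.filter fun v =>
              1 / (Real.log n) ^ (5 + j) < g v ∧ g v ≤ 1 / (Real.log n) ^ (4 + j)).card : ℝ) := by
  have hlog : Tendsto (fun n : ℕ => log n) atTop atTop :=
    tendsto_log_atTop.comp tendsto_natCast_atTop_atTop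
  obtain ⟨N, hN⟩ := eventually_atTop.1 <| (hlog.eventually_ge_atTop 4).and <|
    (hlog.eventually_ge_atTop (2 / ε)).and ((tendsto_log_atTop.comp hlog).eventually_ge_atTop 2)
  refine ⟨N, fun n hn V V' g hcard hg hsum => ?_⟩
  obtain ⟨hL4, hLε, hLL⟩ := hN n hn
  by_contra! hsmall
  have hcard' : (#V' : ℝ) ≤ log n ^ ⌈log n / log (log n)⌉₊ :=
    calc (#V' : ℝ) ≤ n := by exact_mod_cast hcard
      _ ≤ exp (log n) := le_exp_log _
      _ ≤ _ := exp_le_pow_ceil_div_log (by linarith)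
  have hεL : 2 ≤ ε * log n := (div_le_iff₀ hε).1 hLε |>.trans_eq (mul_comm _ _)
  have hsum_le : ∑ v ∈ V', g v ≤ ε / (2 * log n) := calc
    _ ≤ (⌈log n / log (log n)⌉₊ + 1) / log n ^ 4 :=
        sum_le_of_card_logShell_le V' g (by linarith) 4 _ (fun v hv => (hg v hv).2)
          (fun j hj => hsmall j (Nat.lt_ceil.1 hj)) hcard'
    _ ≤ log n / log n ^ 4 := by gcongr; exact ceil_div_log_add_one_le hL4 hLL
    _ ≤ ε / (2 * log n) := by
        rw [div_le_div_iff₀ (by positivity) (by positivity)]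
        calc log n * (2 * log n) = 2 * log n ^ 2 := by ring
          _ ≤ 2 * log n ^ 3 := by gcongr <;> linarith
          _ ≤ ε * log n * log n ^ 3 := by gcongr
          _ = ε * log n ^ 4 := by ring
  linarith
end

section
/- Let {X_i}_{i≥0} be a Markov chain over the nonnegative integers and φ, ψ > 0 constants with φ·ψ < 1. Suppose for every i > 0: (1) X_i can be modeled as a sum of independent Poisson (Bernoulli) trials depending only on X_{i−1}; (2) E[X_{2i+1} | X_{2i}] ≤ φ·X_{2i}; (3) E[X_{2i} | X_{2i−1}] ≤ ψ·X_{2i−1}. Then there exists a constant C_{φψ} > 1 such that for any fixed r > C_{φψ}, if X_0 = O(r), then Σ_{i=0}^{r} X_i = O(r·log r) with probability at least 1 − 2·exp(−3r). -/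
/-!
Chernoff bound through an exponential supermartingale. Given the history up to time `n`,
`X (n + 1)` is a sum of independent Bernoulli variables whose mean is at most `c (n + 1) * X n`
(`c = φ` at odd times, `ψ` at even times), so
`E[exp (b X (n + 1)) | history] ≤ exp (c (n + 1) X n (exp b - 1))`. Hence, for weights with
`t + c (n + 1) (exp (u (n + 1)) - 1) ≤ u n`, the quantity `E exp (t ∑_{j<n} X j + u n X n)`
is non-increasing in `n`. Since `φψ < 1`, such weights exist with `u` equal to a constant `E` at
even times and `O` at odd times, both at least `t > 0`. Therefore
`E exp (t ∑_{j≤r} X j) ≤ E exp (E X 0) ≤ exp (E K₀ r)`, and Markov's inequality bounds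
`P(∑_{j≤r} X j > K r log r)` by `exp (-3r)` as soon as `log r ≥ 1`.
-/

open MeasureTheory ProbabilityTheory

/-- The distribution of a sum of independent Poisson (Bernoulli) trials with success
probabilities `q i`. -/
noncomputable def poissonBinomial {m : ℕ} (q : Fin m → ENNReal) (h : ∀ i, q i ≤ 1) :
    Measure ℕ :=
  Measure.map (fun b : Fin m → Bool => (Finset.univ.filter fun i => b i).card)
    (Measure.pi fun i => (PMF.bernoulli (q i).toNNReal
      (by simpa using ENNReal.toNNReal_mono ENNReal.one_ne_top (h i))).toMeasure)

/-- A measure on `ℕ` is the law of a sum of independent Poisson trials. -/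
def IsPoissonBinomial (ν : Measure ℕ) : Prop :=
  ∃ (m : ℕ) (q : Fin m → ENNReal) (h : ∀ i, q i ≤ 1), ν = poissonBinomial q h

open Real
open scoped ENNReal

lemma PMF.toReal_false_add_toReal_true (β : PMF Bool) :
    (β false).toReal + (β true).toReal = 1 := by
  have h := β.tsum_coe
  rw [tsum_bool] at h
  rw [← ENNReal.toReal_add (β.apply_ne_top _) (β.apply_ne_top _), h, ENNReal.toReal_one]

lemma PMF.toReal_bernoulli_toNNReal_true {p : ℝ≥0∞} (h : p.toNNReal ≤ 1) :
    (PMF.bernoulli p.toNNReal h true).toReal = p.toReal := by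
  simp [PMF.bernoulli_apply, ENNReal.coe_toNNReal_eq_toReal]

section PoissonBinomial

variable {m : ℕ}

lemma natCast_card_filter_eq_sum_toNat (b : Fin m → Bool) :
    (((Finset.univ.filter fun i => b i).card : ℕ) : ℝ) = ∑ i, ((b i).toNat : ℝ) := by
  rw [Finset.card_filter]
  push_cast
  exact Finset.sum_congr rfl fun i _ => by cases b i <;> simp

section BernoulliProduct

variable (β : Fin m → PMF Bool) {p : Fin m → ℝ} (hβ : ∀ i, (β i true).toReal = p i)
include hβ

lemma integral_natCast_card_filter :
    ∫ b, (((Finset.univ.filter fun i => b i).card : ℕ) : ℝ)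
        ∂Measure.pi (fun i => (β i).toMeasure) = ∑ i, p i := by
  simp_rw [natCast_card_filter_eq_sum_toNat]
  rw [integral_finsetSum _ fun i _ => Integrable.of_finite]
  refine Finset.sum_congr rfl fun i _ => ?_
  trans ∫ y : Bool, (y.toNat : ℝ) ∂(β i).toMeasure
  · exact integral_comp_eval (μ := fun i => (β i).toMeasure)
      (measurable_of_finite (fun y : Bool => (y.toNat : ℝ))).aestronglyMeasurable
  · simp [PMF.integral_eq_sum, hβ]

lemma integral_exp_mul_card_filter (s : ℝ) :
    ∫ b, exp (s * ((Finset.univ.filter fun i => b i).card : ℕ))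
        ∂Measure.pi (fun i => (β i).toMeasure) = ∏ i, (1 + p i * (exp s - 1)) := by
  simp_rw [natCast_card_filter_eq_sum_toNat, Finset.mul_sum, exp_sum]
  rw [integral_fintype_prod_eq_prod (f := fun _ (y : Bool) => exp (s * y.toNat))]
  refine Finset.prod_congr rfl fun i _ => ?_
  have h := (β i).toReal_false_add_toReal_true
  simp only [PMF.integral_eq_sum, Fintype.sum_bool, hβ, Bool.toNat_true, Bool.toNat_false,
    smul_eq_mul] at h ⊢
  push_cast
  rw [mul_one, mul_zero, exp_zero]
  linear_combination h

end BernoulliProduct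

variable (q : Fin m → ℝ≥0∞) (hq : ∀ i, q i ≤ 1)

lemma integral_poissonBinomial (f : ℕ → ℝ) :
    ∫ y, f y ∂poissonBinomial q hq = ∫ b, f (Finset.univ.filter fun i => b i).card
        ∂Measure.pi fun i => (PMF.bernoulli (q i).toNNReal
          (by simpa using ENNReal.toNNReal_mono ENNReal.one_ne_top (hq i))).toMeasure :=
  integral_map (measurable_of_finite _).aemeasurable
    (measurable_from_nat (f := f)).aestronglyMeasurable

lemma integrable_poissonBinomial (f : ℕ → ℝ) : Integrable f (poissonBinomial q hq) :=
  (integrable_map_measure (measurable_from_nat (f := f)).aestronglyMeasurable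
    (measurable_of_finite _).aemeasurable).2 Integrable.of_finite

lemma integral_natCast_poissonBinomial :
    ∫ y, (y : ℝ) ∂poissonBinomial q hq = ∑ i, (q i).toReal := by
  rw [integral_poissonBinomial]
  exact integral_natCast_card_filter _ fun i => PMF.toReal_bernoulli_toNNReal_true _

lemma integral_exp_mul_poissonBinomial (s : ℝ) :
    ∫ y, exp (s * y) ∂poissonBinomial q hq = ∏ i, (1 + (q i).toReal * (exp s - 1)) := by
  rw [integral_poissonBinomial]
  exact integral_exp_mul_card_filter _ (fun i => PMF.toReal_bernoulli_toNNReal_true _) s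

end PoissonBinomial

theorem IsPoissonBinomial.lintegral_exp_mul_le {ν : Measure ℕ} (hν : IsPoissonBinomial ν)
    (s : ℝ) :
    ∫⁻ y, .ofReal (exp (s * y)) ∂ν ≤ .ofReal (exp ((∫ y, (y : ℝ) ∂ν) * (exp s - 1))) := by
  obtain ⟨m, q, hq, rfl⟩ := hν
  rw [← ofReal_integral_eq_lintegral_ofReal (integrable_poissonBinomial q hq _)
    (ae_of_all _ fun y => (exp_pos _).le), integral_exp_mul_poissonBinomial,
    integral_natCast_poissonBinomial, Finset.sum_mul, exp_sum]
  refine ENNReal.ofReal_le_ofReal (Finset.prod_le_prod (fun i _ => ?_) fun i _ => ?_)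
  · have : (q i).toReal ≤ 1 := by simpa using ENNReal.toReal_mono ENNReal.one_ne_top (hq i)
    nlinarith [exp_pos s, ENNReal.toReal_nonneg (a := q i)]
  · linarith [add_one_le_exp ((q i).toReal * (exp s - 1))]

section Fibres

variable {Ω : Type*} [MeasurableSpace Ω] {μ : Measure Ω}

lemma lintegral_eq_tsum_setLIntegral_preimage_singleton {β : Type*} [Countable β]
    [MeasurableSpace β] [MeasurableSingletonClass β] {H : Ω → β} (hH : Measurable H)
    (f : Ω → ℝ≥0∞) : ∫⁻ ω, f ω ∂μ = ∑' b, ∫⁻ ω in H ⁻¹' {b}, f ω ∂μ := by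
  rw [← lintegral_iUnion (fun b => hH (measurableSet_singleton b))
    fun a b hab => (Set.disjoint_singleton.2 hab).preimage H, ← Set.preimage_iUnion,
    Set.iUnion_of_singleton, Set.preimage_univ, Measure.restrict_univ]

lemma ae_measure_preimage_singleton_ne_zero {β : Type*} [Countable β] (Y : Ω → β) :
    ∀ᵐ ω ∂μ, μ (Y ⁻¹' {Y ω}) ≠ 0 := by
  rw [ae_iff]
  simp only [ne_eq, not_not]
  have hsub : {ω | μ (Y ⁻¹' {Y ω}) = 0} ⊆ ⋃ b ∈ {b | μ (Y ⁻¹' {b}) = 0}, Y ⁻¹' {b} :=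
    fun ω hω => Set.mem_biUnion (x := Y ω) hω rfl
  exact measure_mono_null hsub ((measure_biUnion_null_iff (Set.to_countable _)).2 fun _ hb => hb)

lemma setLIntegral_comp_eq_of_map_cond_eq [IsFiniteMeasure μ] {β : Type*} [MeasurableSpace β]
    {Y : Ω → β} {A : Set Ω} {ν : Measure β} (hY : Measurable Y) (h : (μ[|A]).map Y = ν)
    {g : β → ℝ≥0∞} (hg : Measurable g) :
    ∫⁻ ω in A, g (Y ω) ∂μ = μ A * ∫⁻ y, g y ∂ν := by
  by_cases hA : μ A = 0
  · rw [setLIntegral_measure_zero _ _ hA, hA, zero_mul]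
  rw [← h, lintegral_map hg hY, ProbabilityTheory.cond, lintegral_smul_measure, smul_eq_mul,
    ← mul_assoc, ENNReal.mul_inv_cancel hA (measure_ne_top μ A), one_mul]

end Fibres

section Transition

variable {Ω : Type*} [MeasurableSpace Ω] {μ : Measure Ω} [IsFiniteMeasure μ] {X : ℕ → Ω → ℕ}
  {n : ℕ} {ν : ℕ → Measure ℕ} (hX : ∀ i, Measurable (X i))
  (hν : ∀ hist : ℕ → ℕ, μ {ω | ∀ j < n + 1, X j ω = hist j} ≠ 0 →
    (μ[|{ω | ∀ j < n + 1, X j ω = hist j}]).map (X (n + 1)) = ν (hist n))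
include hX hν

/-- The Markov property in integrated form. -/
theorem lintegral_mul_comp_succ_eq (Φ : (Fin (n + 1) → ℕ) → ℝ≥0∞) (g : ℕ → ℝ≥0∞) :
    ∫⁻ ω, Φ (fun j => X j ω) * g (X (n + 1) ω) ∂μ
      = ∫⁻ ω, Φ (fun j => X j ω) * ∫⁻ y, g y ∂ν (X n ω) ∂μ := by
  set H : Ω → Fin (n + 1) → ℕ := fun ω j => X j ω
  have hH : Measurable H := measurable_pi_lambda _ fun j => hX j
  rw [lintegral_eq_tsum_setLIntegral_preimage_singleton hH,
    lintegral_eq_tsum_setLIntegral_preimage_singleton hH]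
  refine tsum_congr fun h => ?_
  have hA : MeasurableSet (H ⁻¹' {h}) := hH (measurableSet_singleton h)
  by_cases hA0 : μ (H ⁻¹' {h}) = 0
  · rw [setLIntegral_measure_zero _ _ hA0, setLIntegral_measure_zero _ _ hA0]
  have hmap : (μ[|H ⁻¹' {h}]).map (X (n + 1)) = ν (h (Fin.last n)) := by
    let hist : ℕ → ℕ := fun j => if hj : j < n + 1 then h ⟨j, hj⟩ else 0
    have hAhist : H ⁻¹' {h} = {ω | ∀ j < n + 1, X j ω = hist j} := by
      ext ω
      simp only [H, Set.mem_preimage, Set.mem_singleton_iff, funext_iff, Fin.forall_iff]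
      exact forall₂_congr fun j hj => by rw [show hist j = h ⟨j, hj⟩ from dif_pos hj]
    rw [hAhist, hν hist (hAhist ▸ hA0)]
    exact congrArg ν (dif_pos n.lt_succ_self)
  calc ∫⁻ ω in H ⁻¹' {h}, Φ (H ω) * g (X (n + 1) ω) ∂μ
      = ∫⁻ ω in H ⁻¹' {h}, Φ h * g (X (n + 1) ω) ∂μ :=
        setLIntegral_congr_fun hA fun ω (hω : H ω = h) => by rw [hω]
    _ = Φ h * (μ (H ⁻¹' {h}) * ∫⁻ y, g y ∂ν (h (Fin.last n))) := by
        rw [lintegral_const_mul (f := fun ω => g (X (n + 1) ω)) _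
            ((measurable_of_countable g).comp (hX _)),
          setLIntegral_comp_eq_of_map_cond_eq (hX _) hmap (measurable_of_countable g)]
    _ = ∫⁻ ω in H ⁻¹' {h}, Φ (H ω) * ∫⁻ y, g y ∂ν (X n ω) ∂μ := by
        rw [← mul_assoc, mul_right_comm, ← setLIntegral_const]
        exact setLIntegral_congr_fun hA fun ω (hω : H ω = h) => by rw [← hω]; rfl

theorem map_cond_succ_eq {x : ℕ} (hx : μ {ω | X n ω = x} ≠ 0) :
    (μ[|{ω | X n ω = x}]).map (X (n + 1)) = ν x := by
  have hB : MeasurableSet {ω | X n ω = x} := hX n (measurableSet_singleton x)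
  ext u hu
  have hjoint : μ ({ω | X n ω = x} ∩ X (n + 1) ⁻¹' u) = μ {ω | X n ω = x} * ν x u := by
    have h := lintegral_mul_comp_succ_eq hX hν
      (fun h => ({h | h (Fin.last n) = x} : Set (Fin (n + 1) → ℕ)).indicator 1 h)
      (u.indicator 1)
    simp only [lintegral_indicator_one hu] at h
    rw [← lintegral_indicator_one (hB.inter (hX _ hu)), mul_comm,
      ← lintegral_indicator_const hB]
    classical
    convert h using 2 <;> funext ω <;> by_cases hω : X n ω = x <;>
      simp [Set.indicator_apply, hω]
  rw [Measure.map_apply (hX _) hu, cond_apply hB, hjoint, ← mul_assoc,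
    ENNReal.inv_mul_cancel hx (measure_ne_top _ _), one_mul]

theorem lintegral_exp_succ_le (hνPB : ∀ x, IsPoissonBinomial (ν x)) {c : ℝ}
    (hmean : ∀ x, μ {ω | X n ω = x} ≠ 0 →
      ∫ ω, (X (n + 1) ω : ℝ) ∂μ[|{ω | X n ω = x}] ≤ c * x)
    {t a b : ℝ} (hb : 0 ≤ b) (hab : t + c * (exp b - 1) ≤ a) :
    ∫⁻ ω, .ofReal (exp (t * ∑ j ∈ Finset.range (n + 1), (X j ω : ℝ) + b * X (n + 1) ω)) ∂μ
      ≤ ∫⁻ ω, .ofReal (exp (t * ∑ j ∈ Finset.range n, (X j ω : ℝ) + a * X n ω)) ∂μ := by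
  have hmeanν : ∀ᵐ ω ∂μ, ∫ y, (y : ℝ) ∂ν (X n ω) ≤ c * X n ω := by
    filter_upwards [ae_measure_preimage_singleton_ne_zero (X n)] with ω hω
    rw [← map_cond_succ_eq hX hν hω, integral_map (hX _).aemeasurable
      (measurable_from_nat (f := fun y : ℕ => (y : ℝ))).aestronglyMeasurable]
    exact hmean _ hω
  calc _ = ∫⁻ ω, .ofReal (exp (t * ∑ j : Fin (n + 1), (X j ω : ℝ)))
          * .ofReal (exp (b * X (n + 1) ω)) ∂μ := by
        refine lintegral_congr fun ω => ?_
        rw [Finset.sum_range, exp_add, ENNReal.ofReal_mul (exp_pos _).le]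
    _ = ∫⁻ ω, .ofReal (exp (t * ∑ j : Fin (n + 1), (X j ω : ℝ)))
          * ∫⁻ y, .ofReal (exp (b * y)) ∂ν (X n ω) ∂μ :=
        lintegral_mul_comp_succ_eq hX hν (fun h => .ofReal (exp (t * ∑ j, (h j : ℝ))))
          (fun y => .ofReal (exp (b * y)))
    _ ≤ _ := by
      refine lintegral_mono_ae ?_
      filter_upwards [hmeanν] with ω hω
      rw [Fin.sum_univ_eq_sum_range (fun j => (X j ω : ℝ))]
      calc _ ≤ ENNReal.ofReal (exp (t * ∑ j ∈ Finset.range (n + 1), (X j ω : ℝ)))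
            * .ofReal (exp (c * X n ω * (exp b - 1))) := by
            gcongr
            refine ((hνPB _).lintegral_exp_mul_le b).trans
              (ENNReal.ofReal_le_ofReal (exp_le_exp.2 ?_))
            exact mul_le_mul_of_nonneg_right hω (by linarith [one_le_exp hb])
        _ ≤ _ := by
            rw [← ENNReal.ofReal_mul (exp_pos _).le, ← exp_add, Finset.sum_range_succ]
            refine ENNReal.ofReal_le_ofReal (exp_le_exp.2 ?_)
            nlinarith [mul_le_mul_of_nonneg_right hab (Nat.cast_nonneg (X n ω) : (0 : ℝ) ≤ _)]

end Transition

theorem lintegral_exp_mul_sum_le {Ω : Type*} [MeasurableSpace Ω] {μ : Measure Ω}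
    [IsFiniteMeasure μ] {X : ℕ → Ω → ℕ} (hX : ∀ i, Measurable (X i))
    (hPB : ∀ n, ∃ ν : ℕ → Measure ℕ, (∀ x, IsPoissonBinomial (ν x)) ∧
      ∀ hist : ℕ → ℕ, μ {ω | ∀ j < n + 1, X j ω = hist j} ≠ 0 →
        (μ[|{ω | ∀ j < n + 1, X j ω = hist j}]).map (X (n + 1)) = ν (hist n))
    {c : ℕ → ℝ} (hmean : ∀ n x, μ {ω | X n ω = x} ≠ 0 →
      ∫ ω, (X (n + 1) ω : ℝ) ∂μ[|{ω | X n ω = x}] ≤ c (n + 1) * x)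
    {t : ℝ} {u : ℕ → ℝ} (hu0 : ∀ n, 0 ≤ u n)
    (hu : ∀ n, t + c (n + 1) * (exp (u (n + 1)) - 1) ≤ u n) (r : ℕ) (htr : t ≤ u r) :
    ∫⁻ ω, .ofReal (exp (t * ∑ j ∈ Finset.range (r + 1), (X j ω : ℝ))) ∂μ
      ≤ ∫⁻ ω, .ofReal (exp (u 0 * X 0 ω)) ∂μ := by
  set L : ℕ → ℝ≥0∞ := fun n =>
    ∫⁻ ω, .ofReal (exp (t * ∑ j ∈ Finset.range n, (X j ω : ℝ) + u n * X n ω)) ∂μ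
  have hL : Antitone L := antitone_nat_of_succ_le fun n => by
    obtain ⟨ν, hνPB, hν⟩ := hPB n
    exact lintegral_exp_succ_le hX hν hνPB (hmean n) (hu0 _) (hu n)
  calc _ ≤ L r := lintegral_mono fun ω => by
        refine ENNReal.ofReal_le_ofReal (exp_le_exp.2 ?_)
        rw [Finset.sum_range_succ, mul_add]
        gcongr
    _ ≤ L 0 := hL (Nat.zero_le r)
    _ = _ := by simp [L]

section Chernoff

variable {Ω : Type*} [MeasurableSpace Ω] {μ : Measure Ω}

lemma measure_lt_le_of_lintegral_exp_le {f : Ω → ℝ} (hf : Measurable f) {t a b : ℝ}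
    (ht : 0 ≤ t) (h : ∫⁻ ω, .ofReal (exp (t * f ω)) ∂μ ≤ .ofReal (exp b)) :
    μ {ω | a < f ω} ≤ .ofReal (exp (b - t * a)) := by
  have hpos : ENNReal.ofReal (exp (t * a)) ≠ 0 := by simp [exp_pos]
  calc μ {ω | a < f ω} ≤ μ {ω | .ofReal (exp (t * a)) ≤ ENNReal.ofReal (exp (t * f ω))} :=
        measure_mono fun ω (hω : a < f ω) => ENNReal.ofReal_le_ofReal (exp_le_exp.2 (by gcongr))
    _ ≤ (∫⁻ ω, .ofReal (exp (t * f ω)) ∂μ) / .ofReal (exp (t * a)) :=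
        meas_ge_le_lintegral_div (by fun_prop) hpos ENNReal.ofReal_ne_top
    _ ≤ .ofReal (exp b) / .ofReal (exp (t * a)) := by gcongr
    _ = .ofReal (exp (b - t * a)) := by
        rw [← ENNReal.ofReal_div_of_pos (exp_pos _), exp_sub]

lemma ofReal_one_sub_two_mul_exp_le_measure [IsProbabilityMeasure μ] {S : Ω → ℝ}
    (hS : Measurable S) {t B r : ℝ} (ht : 0 < t) (hB : 0 ≤ B) (hr : 0 ≤ r) (hlog : 1 ≤ log r)
    (h : ∫⁻ ω, .ofReal (exp (t * S ω)) ∂μ ≤ .ofReal (exp (B * r))) :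
    ENNReal.ofReal (1 - 2 * exp (-3 * r)) ≤ μ {ω | S ω ≤ (B + 3) / t * r * log r} := by
  set T := (B + 3) / t * r * log r
  have hexp : B * r - t * T ≤ -3 * r := by
    rw [show t * T = (B + 3) * r * log r by simp only [T]; field_simp]
    nlinarith [mul_nonneg (mul_nonneg (by linarith : 0 ≤ B + 3) hr) (sub_nonneg.2 hlog)]
  have hcompl : {ω | S ω ≤ T} = {ω | T < S ω}ᶜ := by
    ext ω
    simp [not_lt]
  rw [hcompl, prob_compl_eq_one_sub (measurableSet_lt measurable_const hS)]
  calc ENNReal.ofReal (1 - 2 * exp (-3 * r)) ≤ 1 - .ofReal (exp (-3 * r)) := by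
        rw [← ENNReal.ofReal_one, ← ENNReal.ofReal_sub _ (exp_pos _).le]
        exact ENNReal.ofReal_le_ofReal (by linarith [exp_pos (-3 * r)])
    _ ≤ 1 - μ {ω | T < S ω} := tsub_le_tsub_left ((measure_lt_le_of_lintegral_exp_le hS ht.le
        h).trans (ENNReal.ofReal_le_ofReal (exp_le_exp.2 hexp))) 1

end Chernoff

lemma exp_sub_one_le_mul_exp (y : ℝ) : exp y - 1 ≤ y * exp y := by
  nlinarith [one_sub_le_exp_neg y, exp_pos y, exp_neg y, mul_inv_cancel₀ (exp_pos y).ne']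

theorem exists_two_periodic_weights {φ ψ : ℝ} (hφ : 0 ≤ φ) (hψ : 0 ≤ ψ) (hφψ : φ * ψ < 1) :
    ∃ t E O : ℝ, 0 < t ∧ t ≤ E ∧ t ≤ O ∧
      t + φ * (exp O - 1) ≤ E ∧ t + ψ * (exp E - 1) ≤ O := by
  -- `κ² φ ψ < 1`, and `exp y - 1 ≤ κ y` on `[0, log κ]` turns both constraints into
  -- `t + a O ≤ E`, `t + b E ≤ O` with `a b < 1`, solved by the explicit choice below.
  set κ : ℝ := 2 / (1 + φ * ψ)
  have hp : 0 ≤ φ * ψ := mul_nonneg hφ hψ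
  have hκ : 1 < κ := by rw [lt_div_iff₀ (by linarith)]; linarith
  have hab : κ * φ * (κ * ψ) < 1 := by
    have h : κ * φ * (κ * ψ) = 4 * (φ * ψ) / (1 + φ * ψ) ^ 2 := by
      simp only [κ]; field_simp; ring
    rw [h, div_lt_one (by positivity)]
    nlinarith [mul_pos (sub_pos.2 hφψ) (sub_pos.2 hφψ)]
  set a := κ * φ with ha_def
  set b := κ * ψ with hb_def
  have ha : 0 ≤ a := by positivity
  have hb : 0 ≤ b := by positivity
  have hlogκ : 0 < log κ := log_pos hκ
  have hexp : ∀ y, 0 ≤ y → y ≤ log κ → exp y - 1 ≤ κ * y := fun y h0 h1 =>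
    (exp_sub_one_le_mul_exp y).trans <| by
      rw [mul_comm]
      exact mul_le_mul_of_nonneg_right ((exp_le_exp.2 h1).trans (exp_log (by linarith)).le) h0
  have hE : log κ / (1 + b) ≤ log κ := div_le_self hlogκ.le (by linarith)
  have hO : log κ / (1 + a) ≤ log κ := div_le_self hlogκ.le (by linarith)
  refine ⟨log κ * (1 - a * b) / ((1 + a) * (1 + b)), log κ / (1 + b), log κ / (1 + a),
    div_pos (mul_pos hlogκ (by linarith)) (by positivity), ?_, ?_, ?_, ?_⟩
  · rw [div_le_div_iff₀ (by positivity) (by positivity)]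
    nlinarith [mul_nonneg hlogκ.le
      (mul_nonneg (by positivity : 0 ≤ a + a * b) (by positivity : 0 ≤ 1 + b))]
  · rw [div_le_div_iff₀ (by positivity) (by positivity)]
    nlinarith [mul_nonneg hlogκ.le
      (mul_nonneg (by positivity : 0 ≤ b + a * b) (by positivity : 0 ≤ 1 + a))]
  · calc _ ≤ log κ * (1 - a * b) / ((1 + a) * (1 + b)) + a * (log κ / (1 + a)) := by
          refine (add_le_add_iff_left _).2 ?_
          rw [ha_def]
          linarith [mul_le_mul_of_nonneg_left (hexp _ (by positivity) hO) hφ]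
      _ = _ := by field_simp; ring
  · calc _ ≤ log κ * (1 - a * b) / ((1 + a) * (1 + b)) + b * (log κ / (1 + b)) := by
          refine (add_le_add_iff_left _).2 ?_
          rw [hb_def]
          linarith [mul_le_mul_of_nonneg_left (hexp _ (by positivity) hE) hψ]
      _ = _ := by field_simp; ring

lemma cond_integral_succ_le_alternating {Ω : Type*} [MeasurableSpace Ω] {μ : Measure Ω}
    {X : ℕ → Ω → ℕ} {φ ψ : ℝ}
    (hodd : ∀ i x : ℕ, μ {ω | X (2 * i) ω = x} ≠ 0 →
      ∫ ω, (X (2 * i + 1) ω : ℝ) ∂(μ[|{ω | X (2 * i) ω = x}]) ≤ φ * x)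
    (heven : ∀ i x : ℕ, 0 < i → μ {ω | X (2 * i - 1) ω = x} ≠ 0 →
      ∫ ω, (X (2 * i) ω : ℝ) ∂(μ[|{ω | X (2 * i - 1) ω = x}]) ≤ ψ * x)
    (n x : ℕ) (hx : μ {ω | X n ω = x} ≠ 0) :
    ∫ ω, (X (n + 1) ω : ℝ) ∂μ[|{ω | X n ω = x}] ≤ (if Even (n + 1) then ψ else φ) * x := by
  obtain ⟨i, rfl | rfl⟩ := Nat.even_or_odd' n
  · simpa [Nat.not_even_bit1] using hodd i x hx
  · have h := heven (i + 1) x i.succ_pos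
    rw [show 2 * (i + 1) - 1 = 2 * i + 1 by omega, show 2 * (i + 1) = 2 * i + 1 + 1 by ring] at h
    simpa [show Even (2 * i + 1 + 1) from ⟨i + 1, by ring⟩] using h hx

/-- Markov chain aggregation: if `{X_i}` is a Markov chain on `ℕ` such that,
given the history, each `X_i` is distributed as a sum of Poisson trials depending only on
`X_{i-1}`, with conditional drift `E[X_{2i+1} | X_{2i}] ≤ φ·X_{2i}` and
`E[X_{2i} | X_{2i-1}] ≤ ψ·X_{2i-1}` where `φψ < 1`, then there are constants
`C_{φψ} > 1` and `K` (depending only on `φ, ψ` and the constant `K₀` in `X_0 = O(r)`) such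
that for every `r > C_{φψ}` with `X_0 ≤ K₀·r`,
`Σ_{i=0}^r X_i ≤ K·r·log r` with probability at least `1 − 2·exp(−3r)`. -/
theorem stmt7 (φ ψ : ℝ) (hφ : 0 < φ) (hψ : 0 < ψ) (hφψ : φ * ψ < 1)
    (K₀ : ℝ) (hK₀ : 0 < K₀) :
    ∃ (Cφψ K : ℝ), 1 < Cφψ ∧ 0 < K ∧
    ∀ (r : ℕ), Cφψ < (r : ℝ) →
    ∀ (Ω : Type) (_ : MeasurableSpace Ω) (μ : Measure Ω), IsProbabilityMeasure μ →
    ∀ (X : ℕ → Ω → ℕ), (∀ i, Measurable (X i)) →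
      (∀ i : ℕ, 0 < i →
        ∃ ν : ℕ → Measure ℕ, (∀ x, IsPoissonBinomial (ν x)) ∧
          ∀ hist : ℕ → ℕ,
            μ {ω | ∀ j < i, X j ω = hist j} ≠ 0 →
            (μ[|{ω | ∀ j < i, X j ω = hist j}]).map (X i) = ν (hist (i - 1))) →
      (∀ i x : ℕ, μ {ω | X (2 * i) ω = x} ≠ 0 →
        ∫ ω, (X (2 * i + 1) ω : ℝ) ∂(μ[|{ω | X (2 * i) ω = x}]) ≤ φ * x) →
      (∀ i x : ℕ, 0 < i → μ {ω | X (2 * i - 1) ω = x} ≠ 0 →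
        ∫ ω, (X (2 * i) ω : ℝ) ∂(μ[|{ω | X (2 * i - 1) ω = x}]) ≤ ψ * x) →
      (∀ ω, (X 0 ω : ℝ) ≤ K₀ * r) →
      ENNReal.ofReal (1 - 2 * Real.exp (-3 * r)) ≤
        μ {ω | (∑ i ∈ Finset.range (r + 1), (X i ω : ℝ)) ≤ K * r * Real.log r} := by
  obtain ⟨t, E, O, ht, htE, htO, hE, hO⟩ := exists_two_periodic_weights hφ.le hψ.le hφψ
  have hE0 : 0 ≤ E := ht.le.trans htE
  refine ⟨3, (E * K₀ + 3) / t, by norm_num, div_pos (by nlinarith [mul_nonneg hE0 hK₀.le]) ht, ?_⟩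
  intro r hr Ω _ μ _ X hX hPB hodd heven hX0
  have hmgf : ∫⁻ ω, .ofReal (exp (t * ∑ j ∈ Finset.range (r + 1), (X j ω : ℝ))) ∂μ
      ≤ .ofReal (exp (E * K₀ * r)) := by
    refine (lintegral_exp_mul_sum_le hX
      (fun n => by simpa only [Nat.add_sub_cancel] using hPB (n + 1) n.succ_pos)
      (c := fun n => if Even n then ψ else φ) (cond_integral_succ_le_alternating hodd heven)
      (u := fun n => if Even n then E else O) (fun n => by split_ifs <;> linarith)
      (fun n => ?_) r (by split_ifs <;> assumption)).trans ?_
    · rcases Nat.even_or_odd n with hn | hn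
      · simpa [hn, Nat.even_add_one]
      · simpa [Nat.not_even_iff_odd.2 hn, Nat.even_add_one]
    · refine (lintegral_mono (g := fun _ => .ofReal (exp (E * K₀ * r)))
        fun ω => ENNReal.ofReal_le_ofReal (exp_le_exp.2 ?_)).trans (by simp)
      simpa [mul_assoc] using mul_le_mul_of_nonneg_left (hX0 ω) hE0
  have hlog : 1 ≤ log r := by
    rw [le_log_iff_exp_le (by linarith)]
    linarith [exp_one_lt_d9]
  exact ofReal_one_sub_two_mul_exp_le_measure
    (Finset.measurable_sum _ fun j _ => measurable_from_nat.comp (hX j)) ht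
    (mul_nonneg hE0 hK₀.le) r.cast_nonneg hlog hmgf
end

section
/- Let {Y_i} be a sequence of naturals, γ > 1, C > 0, and define intervals I_j = [Cγ^j, Cγ^{j+1}] for j ≥ 0. Every decrease of some element Y_i into I_j (i.e., Y_i > Cγ^{j+1} and Y_{i+1} ∈ I_j) within the first ℓ steps is either preceded by an increase-or-remain of some earlier element into an interval I_{j'} with j' > j, or Y_0 > Cγ^{j+1}. Consequently H^-_{I_j}(ℓ) ≤ 1_{Y_0 > Cγ^{j+1}} + Σ_{j' > j} H^+_{I_{j'}}(ℓ). -/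
open Finset

/-- with intervals `I_j = [Cγ^j, Cγ^{j+1}]`, every decrease of the sequence
`{Y_i}` into `I_j` within the first `ℓ` steps is either preceded by an increase-or-remain
into some higher interval `I_{j'}`, `j' > j`, or `Y_0 > Cγ^{j+1}`; consequently
`H⁻_{I_j}(ℓ) ≤ 1_{Y_0 > Cγ^{j+1}} + Σ_{j' > j} H⁺_{I_{j'}}(ℓ)` (the sum truncated at any
level `J` above all values of the sequence). -/
theorem stmt12 (Y : ℕ → ℕ) (γ C : ℝ) (hγ : 1 < γ) (hC : 0 < C) (ℓ j J : ℕ)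
    (hJ : ∀ i ≤ ℓ, (Y i : ℝ) ≤ C * γ ^ (J + 1)) (hjJ : j ≤ J) :
    (((Finset.range ℓ).filter fun i =>
        C * γ ^ (j + 1) < (Y i : ℝ) ∧
          C * γ ^ j ≤ (Y (i + 1) : ℝ) ∧ (Y (i + 1) : ℝ) ≤ C * γ ^ (j + 1)).card)
      ≤ (if C * γ ^ (j + 1) < (Y 0 : ℝ) then 1 else 0) +
        ∑ j' ∈ Finset.Ioc j J,
          ((Finset.range ℓ).filter fun i =>
            (Y i : ℝ) ≤ C * γ ^ (j' + 1) ∧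
              C * γ ^ j' ≤ (Y (i + 1) : ℝ) ∧ (Y (i + 1) : ℝ) ≤ C * γ ^ (j' + 1)).card := by
  classical
  set Hm : ℕ → ℕ := fun m => ((Finset.range m).filter fun i =>
        C * γ ^ (j + 1) < (Y i : ℝ) ∧
          C * γ ^ j ≤ (Y (i + 1) : ℝ) ∧ (Y (i + 1) : ℝ) ≤ C * γ ^ (j + 1)).card with hHm
  set Hp : ℕ → ℕ → ℕ := fun j' m => ((Finset.range m).filter fun i =>
            (Y i : ℝ) ≤ C * γ ^ (j' + 1) ∧
              C * γ ^ j' ≤ (Y (i + 1) : ℝ) ∧ (Y (i + 1) : ℝ) ≤ C * γ ^ (j' + 1)).card with hHp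
  set b : ℕ → ℕ := fun m => if C * γ ^ (j + 1) < (Y m : ℝ) then 1 else 0 with hb
  have hmono : ∀ j' m, Hp j' m ≤ Hp j' (m + 1) := fun j' m =>
    Finset.card_le_card (Finset.filter_subset_filter _ (Finset.range_subset_range.2 (Nat.le_succ m)))
  have key : ∀ m ≤ ℓ, Hm m + b m ≤ b 0 + ∑ j' ∈ Finset.Ioc j J, Hp j' m := by
    intro m
    induction m with
    | zero => intro _; simp [hHm, hHp]
    | succ m ih =>
      intro hm
      have hm' : m ≤ ℓ := Nat.le_of_succ_le hm
      have IH := ih hm'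
      have hsummono : ∑ j' ∈ Finset.Ioc j J, Hp j' m ≤ ∑ j' ∈ Finset.Ioc j J, Hp j' (m+1) :=
        Finset.sum_le_sum fun j' _ => hmono j' m
      have hsplit : Hm (m+1) = Hm m + (if (C * γ ^ (j + 1) < (Y m : ℝ) ∧
          C * γ ^ j ≤ (Y (m + 1) : ℝ) ∧ (Y (m + 1) : ℝ) ≤ C * γ ^ (j + 1)) then 1 else 0) := by
        simp only [hHm, Finset.range_add_one, Finset.filter_insert]
        split
        · rw [Finset.card_insert_of_notMem (by simp)]
        · simp
      by_cases hb1 : C * γ ^ (j + 1) < (Y (m+1) : ℝ)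
      · -- case B: above after step; no new down-crossing
        have hHmeq : Hm (m+1) = Hm m := by
          rw [hsplit, if_neg]; · ring
          rintro ⟨_, _, h3⟩; exact absurd h3 (not_le.2 hb1)
        by_cases hb0 : C * γ ^ (j + 1) < (Y m : ℝ)
        · -- was already above
          have hbmeq : b m = 1 := if_pos hb0
          have hbm1 : b (m+1) = 1 := if_pos hb1
          rw [hHmeq, hbm1]
          omega
        · -- crossed up: new up-crossing into some higher interval
          have hym : (Y m : ℝ) ≤ C * γ ^ (j + 1) := not_lt.1 hb0
          have hyJ : (Y (m+1) : ℝ) ≤ C * γ ^ (J + 1) := hJ (m+1) hm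
          have hjJ' : j + 1 ≤ J := by
            rcases Nat.lt_or_ge j J with h | h
            · exact h
            · have : j = J := le_antisymm hjJ h
              subst this
              exact absurd (lt_of_lt_of_le hb1 hyJ) (lt_irrefl _)
          have hPj1 : C * γ ^ (j+1) ≤ (Y (m+1) : ℝ) := le_of_lt hb1
          obtain ⟨j0, hj0mem, hj0spec, hup⟩ :
              ∃ j0 ∈ Finset.Ioc j J, C * γ ^ j0 ≤ (Y (m+1) : ℝ) ∧
                (Y (m+1) : ℝ) ≤ C * γ ^ (j0 + 1) := by
            refine ⟨Nat.findGreatest (fun k => C * γ ^ k ≤ (Y (m+1) : ℝ)) J,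
              Finset.mem_Ioc.2 ⟨?_, Nat.findGreatest_le J⟩,
              Nat.findGreatest_spec (P := fun k => C * γ ^ k ≤ (Y (m+1) : ℝ)) hjJ' hPj1, ?_⟩
            · exact lt_of_lt_of_le (Nat.lt_succ_self j) (Nat.le_findGreatest hjJ' hPj1)
            · rcases Nat.lt_or_ge (Nat.findGreatest (fun k => C * γ ^ k ≤ (Y (m+1) : ℝ)) J) J
                with h | h
              · exact le_of_lt (not_le.1 (Nat.findGreatest_is_greatest (Nat.lt_succ_self _) h))
              · exact le_trans hyJ (mul_le_mul_of_nonneg_left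
                  (pow_le_pow_right₀ (le_of_lt hγ) (by omega)) hC.le)
          have hjj0 : j < j0 := (Finset.mem_Ioc.1 hj0mem).1
          have hpow : C * γ ^ (j + 1) ≤ C * γ ^ (j0 + 1) :=
            mul_le_mul_of_nonneg_left (pow_le_pow_right₀ (le_of_lt hγ) (by omega)) hC.le
          have hnew : Hp j0 (m+1) = Hp j0 m + 1 := by
            simp only [hHp, Finset.range_add_one, Finset.filter_insert]
            rw [if_pos ⟨le_trans hym hpow, hj0spec, hup⟩,
              Finset.card_insert_of_notMem (by simp)]
          have hsum : (∑ j' ∈ Finset.Ioc j J, Hp j' m) < ∑ j' ∈ Finset.Ioc j J, Hp j' (m+1) :=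
            Finset.sum_lt_sum (fun j' _ => hmono j' m) ⟨j0, hj0mem, by omega⟩
          have hbm : b m = 0 := if_neg hb0
          have hbm1 : b (m+1) = 1 := if_pos hb1
          rw [hHmeq, hbm1]
          omega
      · -- case A: not above after step
        have hbm1 : b (m+1) = 0 := if_neg hb1
        rw [hbm1]
        by_cases hp : C * γ ^ (j + 1) < (Y m : ℝ) ∧
            C * γ ^ j ≤ (Y (m + 1) : ℝ) ∧ (Y (m + 1) : ℝ) ≤ C * γ ^ (j + 1)
        · have hbm : b m = 1 := if_pos hp.1
          rw [hsplit, if_pos hp]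
          omega
        · rw [hsplit, if_neg hp]
          omega
  have := key ℓ le_rfl
  calc Hm ℓ ≤ Hm ℓ + b ℓ := Nat.le_add_right _ _
    _ ≤ b 0 + ∑ j' ∈ Finset.Ioc j J, Hp j' ℓ := this
end

section
/- Let X_{2i+1} and X_{3i} be given as follows: conditioned on X_{2i} ≤ Cγ^{j+1}, X_{2i+1} is a sum of independent Bernoulli trials with E[X_{2i+1}] ≤ Cγ^{j+1}·φ, and conditioned on X_{2i+1}, X_{2i+2} is a sum of independent Bernoulli trials with E[X_{2i+2}] ≤ X_{2i+1}·ψ. With γ = 1/√(φψ), C = 15/(δ²·min{φ, ψ, φψ}), and 0 < δ < min{1, (φψ)^{-1/4} − 1}, the probability that X_{2i+2} ≥ Cγ^j is at most 2·exp(−5γ^{j+1}). -/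
/-!
For a sum of independent Bernoulli trials with mean at most `b`, the exponential moment satisfies
`E[e^{tX}] ≤ exp (b (e^t - 1))`; Markov's inequality at `t = log (1 + δ)` gives the multiplicative
Chernoff bound `Pr[X ≥ (1 + δ) b] ≤ exp (-δ² b / 3)` for `0 ≤ δ ≤ 1`. It is applied to `X₁` with
`b = Cγ^{j+1}φ`, and, on the event `X₁ < (1 + δ) b`, to `X₂` conditioned on the value of `X₁`,
whose mean is then at most `(1 + δ) bψ`. The choice of `C` makes both exponents at least
`5γ^{j+1}`, and `(1 + δ)² ≤ (φψ)^{-1/2}` gives `(1 + δ)² bψ = (1 + δ)² Cγ^j √(φψ) ≤ Cγ^j`.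
-/

open MeasureTheory ProbabilityTheory

/-- A measure on `ℕ` is the law of a sum of independent Poisson trials with total mean at
most `b`. -/
def IsPoissonBinomialWithMean (ν : Measure ℕ) (b : ℝ) : Prop :=
  ∃ (m : ℕ) (q : Fin m → ENNReal) (h : ∀ i, q i ≤ 1),
    ν = poissonBinomial q h ∧ (∑ i, q i) ≤ ENNReal.ofReal b

open Real
open scoped ENNReal NNReal

lemma lintegral_fintype_prod_eq_prod {ι : Type*} [Fintype ι] {α : ι → Type*}
    [∀ i, MeasurableSpace (α i)] (ν : ∀ i, Measure (α i)) [∀ i, IsProbabilityMeasure (ν i)]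
    {f : ∀ i, α i → ℝ≥0∞} (hf : ∀ i, Measurable (f i)) :
    ∫⁻ x, ∏ i, f i (x i) ∂Measure.pi ν = ∏ i, ∫⁻ y, f i y ∂ν i := by
  rw [lintegral_prod_eq_prod_lintegral_of_indepFun _ _
    (iIndepFun_pi fun i => (hf i).aemeasurable) fun i => (hf i).comp (measurable_pi_apply i)]
  exact Finset.prod_congr rfl fun i _ => (measurePreserving_eval ν i).lintegral_comp (hf i)

lemma lintegral_exp_mul_ite_bernoulli_le (p : ℝ≥0) (hp : p ≤ 1) (t : ℝ) :
    ∫⁻ y, ENNReal.ofReal (exp (t * if y then 1 else 0)) ∂(PMF.bernoulli p hp).toMeasure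
      ≤ ENNReal.ofReal (exp (p * (exp t - 1))) := by
  rw [lintegral_fintype, Fintype.sum_bool]
  simp only [PMF.toMeasure_apply_singleton _ _ (measurableSet_singleton _), PMF.bernoulli_apply,
    cond_true, cond_false, if_true, Bool.false_eq_true, if_false, mul_one, mul_zero, exp_zero,
    ENNReal.ofReal_one, one_mul]
  rw [← ENNReal.ofReal_coe_nnreal, ← ENNReal.ofReal_coe_nnreal, NNReal.coe_sub hp, NNReal.coe_one,
    ← ENNReal.ofReal_mul (exp_pos t).le, ← ENNReal.ofReal_add (by positivity) (by simpa using hp)]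
  refine ENNReal.ofReal_le_ofReal ?_
  linarith [add_one_le_exp (p * (exp t - 1))]

lemma lintegral_exp_mul_poissonBinomial_le {m : ℕ} (q : Fin m → ℝ≥0∞) (hq : ∀ i, q i ≤ 1)
    (t : ℝ) :
    ∫⁻ n, ENNReal.ofReal (exp (t * n)) ∂poissonBinomial q hq
      ≤ ENNReal.ofReal (exp ((∑ i, (q i).toReal) * (exp t - 1))) := by
  have exp_card : ∀ b : Fin m → Bool,
      ENNReal.ofReal (exp (t * (Finset.univ.filter fun i => b i).card))
        = ∏ i, ENNReal.ofReal (exp (t * if b i then 1 else 0)) := by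
    intro b
    rw [← ENNReal.ofReal_prod_of_nonneg fun i _ => (exp_pos _).le, ← exp_sum,
      Finset.card_filter, Nat.cast_sum, Finset.mul_sum]
    simp only [Nat.cast_ite, Nat.cast_one, Nat.cast_zero]
  rw [poissonBinomial, lintegral_map (measurable_of_countable _) (measurable_of_finite _)]
  simp_rw [exp_card]
  rw [lintegral_fintype_prod_eq_prod _ (f := fun _ (y : Bool) =>
      ENNReal.ofReal (exp (t * if y then 1 else 0))) fun _ => measurable_of_finite _,
    Finset.sum_mul, exp_sum, ENNReal.ofReal_prod_of_nonneg fun i _ => (exp_pos _).le]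
  exact Finset.prod_le_prod' fun i _ => lintegral_exp_mul_ite_bernoulli_le _ _ t

lemma add_sq_div_three_le_one_add_mul_log {δ : ℝ} (hδ0 : 0 ≤ δ) (hδ1 : δ ≤ 1) :
    δ + δ ^ 2 / 3 ≤ (1 + δ) * log (1 + δ) :=
  calc δ + δ ^ 2 / 3 ≤ (1 + δ) * (2 * δ / (δ + 2)) := by
        rw [mul_div_assoc', le_div_iff₀ (by linarith)]
        nlinarith [mul_nonneg (sq_nonneg δ) (sub_nonneg.2 hδ1)]
    _ ≤ (1 + δ) * log (1 + δ) := by gcongr; exact le_log_one_add_of_nonneg hδ0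

namespace IsPoissonBinomialWithMean

variable {ν : Measure ℕ} {b : ℝ}

lemma mono {b' : ℝ} (hν : IsPoissonBinomialWithMean ν b) (hb : b ≤ b') :
    IsPoissonBinomialWithMean ν b' := by
  obtain ⟨m, q, hq, rfl, hsum⟩ := hν
  exact ⟨m, q, hq, rfl, hsum.trans (ENNReal.ofReal_le_ofReal hb)⟩

lemma measure_ge_le (hν : IsPoissonBinomialWithMean ν b) (hb : 0 ≤ b) {t : ℝ} (ht : 0 ≤ t)
    (a : ℝ) : ν {n | a ≤ (n : ℝ)} ≤ ENNReal.ofReal (exp (b * (exp t - 1) - t * a)) := by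
  obtain ⟨m, q, hq, rfl, hsum⟩ := hν
  have hsum' : ∑ i, (q i).toReal ≤ b := by
    rw [← ENNReal.toReal_sum fun i _ => ((hq i).trans_lt ENNReal.one_lt_top).ne]
    exact ENNReal.toReal_le_of_le_ofReal hb hsum
  have hmarkov : {n : ℕ | a ≤ (n : ℝ)}
      ⊆ {n | ENNReal.ofReal (exp (t * a)) ≤ ENNReal.ofReal (exp (t * n))} := fun n hn =>
    ENNReal.ofReal_le_ofReal (exp_le_exp.2 (mul_le_mul_of_nonneg_left hn ht))
  calc poissonBinomial q hq {n | a ≤ (n : ℝ)}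
      ≤ (∫⁻ n, ENNReal.ofReal (exp (t * n)) ∂poissonBinomial q hq)
          / ENNReal.ofReal (exp (t * a)) :=
        (measure_mono hmarkov).trans <| meas_ge_le_lintegral_div
          (measurable_of_countable _).aemeasurable (by simp [exp_pos]) ENNReal.ofReal_ne_top
    _ ≤ ENNReal.ofReal (exp (b * (exp t - 1))) / ENNReal.ofReal (exp (t * a)) := by
        gcongr
        refine (lintegral_exp_mul_poissonBinomial_le q hq t).trans ?_
        gcongr
        linarith [add_one_le_exp t]
    _ = ENNReal.ofReal (exp (b * (exp t - 1) - t * a)) := by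
        rw [← ENNReal.ofReal_div_of_pos (exp_pos _), ← exp_sub]

lemma measure_ge_le_exp_neg_sq (hν : IsPoissonBinomialWithMean ν b) (hb : 0 ≤ b) {δ a : ℝ}
    (hδ0 : 0 ≤ δ) (hδ1 : δ ≤ 1) (ha : (1 + δ) * b ≤ a) :
    ν {n | a ≤ (n : ℝ)} ≤ ENNReal.ofReal (exp (-(δ ^ 2 * b / 3))) := by
  have hlog : 0 ≤ log (1 + δ) := log_nonneg (by linarith)
  refine (hν.measure_ge_le hb hlog a).trans (ENNReal.ofReal_le_ofReal (exp_le_exp.2 ?_))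
  rw [exp_log (by linarith)]
  have := add_sq_div_three_le_one_add_mul_log hδ0 hδ1
  nlinarith [mul_le_mul_of_nonneg_left ha hlog, mul_le_mul_of_nonneg_right this hb]

end IsPoissonBinomialWithMean

lemma measure_le_measure_preimage_add_of_cond_le {Ω α : Type*} [MeasurableSpace Ω]
    [MeasurableSpace α] [Countable α] [DiscreteMeasurableSpace α] (μ : Measure Ω)
    [IsProbabilityMeasure μ] {X : Ω → α} (hX : Measurable X) (A : Set α) (S : Set Ω) {c : ℝ≥0∞}
    (hc : ∀ x ∉ A, μ (X ⁻¹' {x}) ≠ 0 → μ[S | X ⁻¹' {x}] ≤ c) :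
    μ S ≤ μ (X ⁻¹' A) + c := by
  have hfiber : ∀ x, μ (X ⁻¹' {x} ∩ (S \ X ⁻¹' A)) ≤ c * μ (X ⁻¹' {x}) := by
    intro x
    by_cases hxA : x ∈ A
    · have : X ⁻¹' {x} ∩ (S \ X ⁻¹' A) = ∅ := Set.eq_empty_of_forall_notMem
        fun ω ⟨hωx, _, hωA⟩ => hωA <| by
          rwa [Set.mem_preimage, Set.eq_of_mem_singleton hωx]
      simp [this]
    by_cases h0 : μ (X ⁻¹' {x}) = 0
    · simp [measure_mono_null Set.inter_subset_left h0]
    calc μ (X ⁻¹' {x} ∩ (S \ X ⁻¹' A)) ≤ μ[S | X ⁻¹' {x}] * μ (X ⁻¹' {x}) := by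
          rw [cond_mul_eq_inter (hX (measurableSet_singleton x))]
          exact measure_mono (Set.inter_subset_inter_right _ Set.sdiff_subset)
      _ ≤ c * μ (X ⁻¹' {x}) := by gcongr; exact hc x hxA h0
  have hcover : S \ X ⁻¹' A ⊆ ⋃ x, X ⁻¹' {x} ∩ (S \ X ⁻¹' A) := fun ω hω =>
    Set.mem_iUnion.2 ⟨X ω, rfl, hω⟩
  have htotal : ∑' x, μ (X ⁻¹' {x}) = 1 := by
    rw [← tsum_univ, tsum_measure_preimage_singleton Set.countable_univ
      fun x _ => hX (measurableSet_singleton x), Set.preimage_univ, measure_univ]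
  calc μ S ≤ μ (S ∩ X ⁻¹' A) + μ (S \ X ⁻¹' A) := measure_le_inter_add_sdiff μ S _
    _ ≤ μ (X ⁻¹' A) + ∑' x, c * μ (X ⁻¹' {x}) := by
        gcongr
        · exact Set.inter_subset_right
        · exact (measure_mono hcover).trans
            ((measure_iUnion_le _).trans (ENNReal.tsum_le_tsum hfiber))
    _ = μ (X ⁻¹' A) + c := by rw [ENNReal.tsum_mul_left, htotal, mul_one]

theorem measure_ge_le_of_isPoissonBinomialWithMean_of_cond {Ω : Type*} [MeasurableSpace Ω]
    (μ : Measure Ω) [IsProbabilityMeasure μ] {X₁ X₂ : Ω → ℕ} (hX₁ : Measurable X₁)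
    (hX₂ : Measurable X₂) {b ψ δ a : ℝ} (hb : 0 ≤ b) (hψ : 0 ≤ ψ) (hδ0 : 0 ≤ δ) (hδ1 : δ ≤ 1)
    (ha : (1 + δ) ^ 2 * ψ * b ≤ a) (h₁ : IsPoissonBinomialWithMean (μ.map X₁) b)
    (h₂ : ∀ x : ℕ, μ {ω | X₁ ω = x} ≠ 0 →
      IsPoissonBinomialWithMean ((μ[|{ω | X₁ ω = x}]).map X₂) (ψ * x)) :
    μ {ω | a ≤ (X₂ ω : ℝ)}
      ≤ ENNReal.ofReal (exp (-(δ ^ 2 * b / 3)))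
        + ENNReal.ofReal (exp (-(δ ^ 2 * ((1 + δ) * ψ * b) / 3))) := by
  refine (measure_le_measure_preimage_add_of_cond_le μ hX₁ {n | (1 + δ) * b ≤ (n : ℝ)} _ ?_).trans
    (add_le_add ?_ le_rfl)
  · intro x hx h0
    have hx : (x : ℝ) ≤ (1 + δ) * b := (not_le.1 hx).le
    have hmean : ψ * x ≤ (1 + δ) * ψ * b := by nlinarith
    change μ[X₂ ⁻¹' {n : ℕ | a ≤ (n : ℝ)} | X₁ ⁻¹' {x}] ≤ _
    rw [← Measure.map_apply hX₂ MeasurableSet.of_discrete]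
    exact ((h₂ x h0).mono hmean).measure_ge_le_exp_neg_sq (by positivity) hδ0 hδ1 (by linarith)
  · rw [← Measure.map_apply hX₁ MeasurableSet.of_discrete]
    exact h₁.measure_ge_le_exp_neg_sq hb hδ0 hδ1 le_rfl

lemma sq_mul_one_div_sqrt_mul_le_one {x s : ℝ} (hx : 0 ≤ x) (hs : 0 < s)
    (h : x ≤ s ^ (-(1 : ℝ) / 4)) : x ^ 2 * (1 / √s * s) ≤ 1 :=
  calc x ^ 2 * (1 / √s * s) ≤ (s ^ (-(1 : ℝ) / 4)) ^ 2 * s ^ (1 / 2 : ℝ) := by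
        rw [one_div_mul_eq_div, div_sqrt, sqrt_eq_rpow]
        gcongr
    _ = 1 := by
      rw [← rpow_natCast, ← rpow_mul hs.le, ← rpow_add hs]
      norm_num

theorem stmt16_general {Ω : Type*} [MeasurableSpace Ω] (μ : Measure Ω) [IsProbabilityMeasure μ]
    (φ ψ δ C γ : ℝ) (hφ : 0 < φ) (hψ : 0 < ψ)
    (hγ : γ = 1 / Real.sqrt (φ * ψ))
    (hC : C = 15 / (δ ^ 2 * min (min φ ψ) (φ * ψ)))
    (hδ0 : 0 < δ) (hδ1 : δ < min 1 ((φ * ψ) ^ (-(1 : ℝ) / 4) - 1))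
    (j : ℕ) (X1 X2 : Ω → ℕ) (hm1 : Measurable X1) (hm2 : Measurable X2)
    (h1 : IsPoissonBinomialWithMean (μ.map X1) (C * γ ^ (j + 1) * φ))
    (h2 : ∀ x : ℕ, μ {ω | X1 ω = x} ≠ 0 →
      IsPoissonBinomialWithMean ((μ[|{ω | X1 ω = x}]).map X2) (ψ * x)) :
    μ {ω | C * γ ^ j ≤ (X2 ω : ℝ)} ≤ ENNReal.ofReal (2 * Real.exp (-5 * γ ^ (j + 1))) := by
  obtain ⟨hδ1, hδφψ⟩ := lt_min_iff.1 hδ1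
  have hφψ_pos : 0 < φ * ψ := mul_pos hφ hψ
  have hmin : 0 < min (min φ ψ) (φ * ψ) := lt_min (lt_min hφ hψ) hφψ_pos
  have hγ0 : 0 < γ := by rw [hγ]; positivity
  have hC0 : 0 < C := by rw [hC]; positivity
  have fifteen_le : ∀ x, min (min φ ψ) (φ * ψ) ≤ x → 15 ≤ δ ^ 2 * C * x := fun x hx => by
    have : δ ^ 2 * C = 15 / min (min φ ψ) (φ * ψ) := by rw [hC]; field_simp
    rw [this, div_mul_eq_mul_div, le_div_iff₀ hmin]
    linarith
  have hφ15 := fifteen_le φ ((min_le_left _ _).trans (min_le_left _ _))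
  have hφψ15 := fifteen_le (φ * ψ) (min_le_right _ _)
  have hmean : (1 + δ) ^ 2 * ψ * (C * γ ^ (j + 1) * φ) ≤ C * γ ^ j :=
    calc (1 + δ) ^ 2 * ψ * (C * γ ^ (j + 1) * φ)
        = C * γ ^ j * ((1 + δ) ^ 2 * (γ * (φ * ψ))) := by ring
      _ ≤ C * γ ^ j := mul_le_of_le_one_right (by positivity)
          (hγ ▸ sq_mul_one_div_sqrt_mul_le_one (by linarith) hφψ_pos (by linarith))
  have hγpow : 0 < γ ^ (j + 1) := pow_pos hγ0 _
  calc μ {ω | C * γ ^ j ≤ (X2 ω : ℝ)}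
      ≤ ENNReal.ofReal (exp (-(δ ^ 2 * (C * γ ^ (j + 1) * φ) / 3)))
        + ENNReal.ofReal (exp (-(δ ^ 2 * ((1 + δ) * ψ * (C * γ ^ (j + 1) * φ)) / 3))) :=
        measure_ge_le_of_isPoissonBinomialWithMean_of_cond μ hm1 hm2 (by positivity) hψ.le
          hδ0.le hδ1.le hmean h1 h2
    _ ≤ ENNReal.ofReal (exp (-5 * γ ^ (j + 1))) + ENNReal.ofReal (exp (-5 * γ ^ (j + 1))) := by
        gcongr
        · nlinarith
        · nlinarith [mul_le_mul_of_nonneg_right hφψ15 hγpow.le]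
    _ = ENNReal.ofReal (2 * exp (-5 * γ ^ (j + 1))) := by
        rw [← ENNReal.ofReal_add (exp_pos _).le (exp_pos _).le, two_mul]

/-- two-step Chernoff. `X₁` (= `X_{2i+1}`) is a sum of independent Bernoulli
trials with mean at most `Cγ^{j+1}·φ`, and conditionally on `X₁ = x`, `X₂` (= `X_{2i+2}`)
is a sum of independent Bernoulli trials with mean at most `ψ·x`. With `γ = 1/√(φψ)`,
`C = 15/(δ²·min{φ,ψ,φψ})` and `0 < δ < min{1, (φψ)^{-1/4} − 1}`,
`Pr[X₂ ≥ Cγ^j] ≤ 2·exp(−5γ^{j+1})`. -/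
theorem stmt16 {Ω : Type*} [MeasurableSpace Ω] (μ : Measure Ω) [IsProbabilityMeasure μ]
    (φ ψ δ C γ : ℝ) (hφ : 0 < φ) (hψ : 0 < ψ) (hφψ : φ * ψ < 1)
    (hγ : γ = 1 / Real.sqrt (φ * ψ))
    (hC : C = 15 / (δ ^ 2 * min (min φ ψ) (φ * ψ)))
    (hδ0 : 0 < δ) (hδ1 : δ < min 1 ((φ * ψ) ^ (-(1 : ℝ) / 4) - 1))
    (j : ℕ) (X1 X2 : Ω → ℕ) (hm1 : Measurable X1) (hm2 : Measurable X2)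
    (h1 : IsPoissonBinomialWithMean (μ.map X1) (C * γ ^ (j + 1) * φ))
    (h2 : ∀ x : ℕ, μ {ω | X1 ω = x} ≠ 0 →
      IsPoissonBinomialWithMean ((μ[|{ω | X1 ω = x}]).map X2) (ψ * x)) :
    μ {ω | C * γ ^ j ≤ (X2 ω : ℝ)} ≤ ENNReal.ofReal (2 * Real.exp (-5 * γ ^ (j + 1))) :=
  stmt16_general μ φ ψ δ C γ hφ hψ hγ hC hδ0 hδ1 j X1 X2 hm1 hm2 h1 h2
end
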